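/- arXiv:2411.19546 — 4 statements merged into one kernel-verified Lean document; each statement's English description precedes it below -/
import Mathlib

section
/- Classical kinetic uncertainty recovery identity: for an irreducible continuous-time Markov chain with rates w_{mn} = e^{ω_{mn}} (m≠n), stationary distribution π, and steady-state current average ⟨φ⟩ = τ Σ_{m≠n} c_{mn} w_{mn} π_n, the sum of responses to all log-rate perturbations equals the average itself: Σ_{m≠n} ∂⟨φ⟩/∂ω_{mn} = ⟨φ⟩. -/
/-- Transition rate matrix with rates `w_{mn} = exp(ω_{mn})` (m ≠ n) and diagonal
entries making column sums vanish. -/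
noncomputable def rateMatrix {d : ℕ} (ω : Fin d → Fin d → ℝ) (m n : Fin d) : ℝ :=
  if m = n then -(∑ k ∈ Finset.univ.erase n, Real.exp (ω k n)) else Real.exp (ω m n)

/-- The coordinate direction `e_{mn}` in the parameter space of log-rates. -/
def logRateDir {d : ℕ} (m n : Fin d) : Fin d → Fin d → ℝ :=
  fun a b => if a = m ∧ b = n then 1 else 0

/-- Classical kinetic uncertainty recovery identity: for an irreducible Markov chain
with rates `w_{mn} = e^{ω_{mn}}`, stationary distribution `π(ω)`, and steady-state
current average `⟨φ⟩(ω) = τ Σ_{m≠n} c_{mn} e^{ω_{mn}} π_n(ω)`, the sum of the responses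
to all log-rate perturbations equals the average itself:
`Σ_{m≠n} ∂⟨φ⟩/∂ω_{mn} = ⟨φ⟩`. -/
theorem sum_logRate_responses_eq_average {d : ℕ} (hd : 0 < d)
    (π : (Fin d → Fin d → ℝ) → (Fin d → ℝ))
    (hπdiff : Differentiable ℝ π)
    (hπpos : ∀ ω j, 0 < π ω j)
    (hπnorm : ∀ ω, ∑ j, π ω j = 1)
    (hstat : ∀ ω m, ∑ n, rateMatrix ω m n * π ω n = 0)
    -- irreducibility: the stationary distribution is the unique kernel direction
    (hker : ∀ (ω : Fin d → Fin d → ℝ) (v : Fin d → ℝ),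
      (∀ m, ∑ n, rateMatrix ω m n * v n = 0) → ∃ c : ℝ, v = fun j => c * π ω j)
    (c : Fin d → Fin d → ℝ) (τ : ℝ) (hτ : 0 < τ)
    (φ : (Fin d → Fin d → ℝ) → ℝ)
    (hφ : ∀ ω, φ ω = τ * ∑ m, ∑ n,
      if m = n then 0 else c m n * Real.exp (ω m n) * π ω n)
    (ω₀ : Fin d → Fin d → ℝ) :
    ∑ m, ∑ n, (if m = n then 0 else fderiv ℝ φ ω₀ (logRateDir m n)) = φ ω₀ := by
  classical
  -- the off-diagonal all-ones direction
  set v : Fin d → Fin d → ℝ := fun a b => if a = b then 0 else 1 with hvdef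
  have key : ∀ (s : ℝ) (a b : Fin d), a ≠ b →
      Real.exp ((ω₀ + s • v) a b) = Real.exp s * Real.exp (ω₀ a b) := by
    intro s a b hab
    have : (ω₀ + s • v) a b = ω₀ a b + s := by
      simp [hvdef, hab]
    rw [this, Real.exp_add, mul_comm]
  -- rate matrix scales by exp s
  have hrate : ∀ (s : ℝ) (m n : Fin d),
      rateMatrix (ω₀ + s • v) m n = Real.exp s * rateMatrix ω₀ m n := by
    intro s m n
    unfold rateMatrix
    by_cases h : m = n
    · simp only [h, if_true, mul_neg, neg_inj, Finset.mul_sum]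
      refine Finset.sum_congr rfl fun k hk => ?_
      exact key s k n (Finset.ne_of_mem_erase hk)
    · simp only [h, if_false]
      exact key s m n h
  -- stationary distribution is invariant under the scaling
  have hπinv : ∀ s : ℝ, π (ω₀ + s • v) = π ω₀ := by
    intro s
    obtain ⟨k, hk⟩ := hker (ω₀ + s • v) (π ω₀) (by
      intro m
      have h0 := hstat ω₀ m
      calc ∑ n, rateMatrix (ω₀ + s • v) m n * π ω₀ n
          = Real.exp s * ∑ n, rateMatrix ω₀ m n * π ω₀ n := by
            rw [Finset.mul_sum]
            exact Finset.sum_congr rfl fun n _ => by rw [hrate]; ring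
        _ = 0 := by rw [h0, mul_zero])
    have hk1 : k = 1 := by
      have h1 : (1 : ℝ) = k * 1 := by
        calc (1 : ℝ) = ∑ j, π ω₀ j := (hπnorm ω₀).symm
          _ = ∑ j, k * π (ω₀ + s • v) j := by simp only [hk]
          _ = k * ∑ j, π (ω₀ + s • v) j := by rw [Finset.mul_sum]
          _ = k * 1 := by rw [hπnorm]
      linarith
    funext j
    have := congrFun hk j
    rw [this, hk1, one_mul]
  -- φ scales by exp s along the direction v
  have hg : ∀ s : ℝ, φ (ω₀ + s • v) = Real.exp s * φ ω₀ := by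
    intro s
    have hterm : ∀ m n : Fin d,
        (if m = n then (0:ℝ) else c m n * Real.exp ((ω₀ + s • v) m n) * π (ω₀ + s • v) n)
        = Real.exp s * (if m = n then 0 else c m n * Real.exp (ω₀ m n) * π ω₀ n) := by
      intro m n
      by_cases h : m = n
      · simp [h]
      · simp only [h, if_false, hπinv s]
        rw [key s m n h]; ring
    rw [hφ, hφ]
    simp only [hterm, ← Finset.mul_sum]
    ring
  -- differentiability of φ
  have hφfun : φ = fun ω => τ * ∑ m, ∑ n,
      if m = n then 0 else c m n * Real.exp (ω m n) * π ω n := funext hφ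
  have heval : ∀ m n : Fin d, Differentiable ℝ (fun ω : Fin d → Fin d → ℝ => ω m n) :=
    fun m n => ((ContinuousLinearMap.proj n).comp
      (ContinuousLinearMap.proj m : (Fin d → Fin d → ℝ) →L[ℝ] (Fin d → ℝ))).differentiable
  have hπn : ∀ n : Fin d, Differentiable ℝ (fun ω => π ω n) :=
    fun n => (ContinuousLinearMap.proj n :
      (Fin d → ℝ) →L[ℝ] ℝ).differentiable.comp hπdiff
  have hφdiff : Differentiable ℝ φ := by
    rw [hφfun]
    refine Differentiable.const_mul ?_ τ
    refine Differentiable.fun_sum fun m _ => Differentiable.fun_sum fun n _ => ?_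
    by_cases h : m = n
    · simpa [h] using (differentiable_const (0:ℝ))
    · simp only [h, if_false]
      exact ((differentiable_const (c m n)).mul
        (Real.differentiable_exp.comp (heval m n))).mul (hπn n)
  -- derivative along the line s ↦ ω₀ + s • v
  have hline : HasDerivAt (fun s : ℝ => ω₀ + s • v) v 0 := by
    simpa using ((hasDerivAt_id (0:ℝ)).smul_const v).const_add ω₀
  have h1 : HasDerivAt (fun s : ℝ => φ (ω₀ + s • v)) (fderiv ℝ φ ω₀ v) 0 := by
    have hF : HasFDerivAt φ (fderiv ℝ φ ω₀) ((fun s : ℝ => ω₀ + s • v) 0) := by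
      simpa using (hφdiff ω₀).hasFDerivAt
    exact hF.comp_hasDerivAt 0 hline
  have h2 : HasDerivAt (fun s : ℝ => φ (ω₀ + s • v)) (φ ω₀) 0 := by
    have heq : (fun s : ℝ => φ (ω₀ + s • v)) = fun s : ℝ => Real.exp s * φ ω₀ := funext hg
    rw [heq]
    simpa using (Real.hasDerivAt_exp 0).mul_const (φ ω₀)
  have hkey : fderiv ℝ φ ω₀ v = φ ω₀ := h1.unique h2
  -- sum of coordinate directions is v
  have hsum : (∑ m, ∑ n, if m = n then 0 else logRateDir m n) = v := by
    funext a b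
    have h1 : (∑ m : Fin d, ∑ n : Fin d,
        if m = n then (0 : Fin d → Fin d → ℝ) else logRateDir m n) a b
        = ∑ m : Fin d, ∑ n : Fin d,
          (if m = n then (0:ℝ) else if a = m ∧ b = n then 1 else 0) := by
      simp only [Finset.sum_apply, ite_apply, Pi.zero_apply, logRateDir]
    rw [h1]
    by_cases hab : a = b
    · subst hab
      have : v a a = 0 := by simp [hvdef]
      rw [this]
      refine Finset.sum_eq_zero fun m _ => Finset.sum_eq_zero fun n _ => ?_
      by_cases h : m = n
      · simp [h]
      · have : ¬ (a = m ∧ a = n) := fun ⟨h1, h2⟩ => h (h1 ▸ h2 ▸ rfl)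
        simp [h, this]
    · have hv1 : v a b = 1 := by simp [hvdef, hab]
      rw [hv1]
      have hterm : ∀ m n : Fin d,
          (if m = n then (0:ℝ) else if a = m ∧ b = n then 1 else 0)
          = (if a = m then (1:ℝ) else 0) * (if b = n then 1 else 0) := by
        intro m n
        by_cases h1 : a = m
        · by_cases h2 : b = n
          · have hmn : m ≠ n := fun h => hab (by rw [h1, h, ← h2])
            rw [if_neg hmn, if_pos ⟨h1, h2⟩, if_pos h1, if_pos h2, one_mul]
          · rw [if_pos h1, if_neg h2, mul_zero]
            by_cases h3 : m = n
            · rw [if_pos h3]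
            · rw [if_neg h3, if_neg (fun hc => h2 hc.2)]
        · rw [if_neg h1, zero_mul]
          by_cases h3 : m = n
          · rw [if_pos h3]
          · rw [if_neg h3, if_neg (fun hc => h1 hc.1)]
      simp only [hterm]
      rw [← Finset.sum_mul_sum]
      simp
  -- conclude by linearity of the derivative
  have hlin : ∑ m, ∑ n, (if m = n then (0:ℝ) else fderiv ℝ φ ω₀ (logRateDir m n))
      = fderiv ℝ φ ω₀ v := by
    rw [← hsum, map_sum]
    refine Finset.sum_congr rfl fun m _ => ?_
    rw [map_sum]
    refine Finset.sum_congr rfl fun n _ => ?_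
    by_cases h : m = n <;> simp [h]
  rw [hlin, hkey]
end

section
/- For an irreducible rate matrix W with stationary distribution π, the sum over all off-diagonal log-rate derivatives of each stationary probability vanishes: Σ_{m≠n} ∂π_j/∂ω_{mn} = 0 for every state j, where w_{mn} = e^{ω_{mn}}. -/
/-!
Adding the same constant `t` to every off-diagonal log-rate multiplies `W` by `e^t`, which does
not change its kernel; by irreducibility and normalisation `π` is therefore invariant along the
direction `Σ_{m≠n} e_{mn}`. Its derivative in that direction, which is the sum in question,
vanishes.
-/

open Finset

def offDiagDir (d : ℕ) : Fin d → Fin d → ℝ := fun a b => if a = b then 0 else 1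

lemma offDiagDir_eq_sum_logRateDir (d : ℕ) :
    offDiagDir d = ∑ m, ∑ n, if m = n then 0 else logRateDir m n := by
  ext a b
  have hterm : ∀ m n : Fin d, (if m = n then (0 : Fin d → Fin d → ℝ) else logRateDir m n) a b
      = if a = m then if b = n then offDiagDir d a b else 0 else 0 := by
    intro m n
    rw [apply_ite (fun g : Fin d → Fin d → ℝ => g a b)]
    simp only [Pi.zero_apply, offDiagDir, logRateDir]
    grind
  simp [Finset.sum_apply, hterm]

lemma rateMatrix_add_smul_offDiagDir {d : ℕ} (ω : Fin d → Fin d → ℝ) (t : ℝ) (m n : Fin d) :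
    rateMatrix (ω + t • offDiagDir d) m n = Real.exp t * rateMatrix ω m n := by
  unfold rateMatrix
  split_ifs with hmn
  · rw [mul_neg, mul_sum]
    refine congrArg _ (sum_congr rfl fun k hk => ?_)
    simp [offDiagDir, ne_of_mem_erase hk, Real.exp_add, mul_comm]
  · simp [offDiagDir, hmn, Real.exp_add, mul_comm]

lemma eq_of_sum_eq_one_of_eq_const_mul {ι : Type*} [Fintype ι] {v w : ι → ℝ}
    (hv : ∑ j, v j = 1) (hw : ∑ j, w j = 1) (h : ∃ c : ℝ, v = fun j => c * w j) : v = w := by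
  obtain ⟨c, rfl⟩ := h
  rw [← mul_sum, hw, mul_one] at hv
  simp [hv]

lemma stationary_add_smul_offDiagDir {d : ℕ}
    (π : (Fin d → Fin d → ℝ) → (Fin d → ℝ))
    (hπnorm : ∀ ω, ∑ j, π ω j = 1)
    (hstat : ∀ ω m, ∑ n, rateMatrix ω m n * π ω n = 0)
    (hker : ∀ (ω : Fin d → Fin d → ℝ) (v : Fin d → ℝ),
      (∀ m, ∑ n, rateMatrix ω m n * v n = 0) → ∃ c : ℝ, v = fun j => c * π ω j)
    (ω : Fin d → Fin d → ℝ) (t : ℝ) :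
    π (ω + t • offDiagDir d) = π ω := by
  have hker_shift : ∀ m, ∑ n, rateMatrix ω m n * π (ω + t • offDiagDir d) n = 0 := by
    intro m
    have h := hstat (ω + t • offDiagDir d) m
    simp only [rateMatrix_add_smul_offDiagDir, mul_assoc, ← mul_sum] at h
    exact (mul_eq_zero.mp h).resolve_left (Real.exp_ne_zero t)
  exact eq_of_sum_eq_one_of_eq_const_mul (hπnorm _) (hπnorm ω) (hker ω _ hker_shift)

lemma fderiv_apply_eq_zero_of_forall_add_smul_eq {𝕜 E F : Type*} [NontriviallyNormedField 𝕜]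
    [NormedAddCommGroup E] [NormedSpace 𝕜 E] [NormedAddCommGroup F] [NormedSpace 𝕜 F]
    {f : E → F} {x v : E} (h : ∀ t : 𝕜, f (x + t • v) = f x) : fderiv 𝕜 f x v = 0 := by
  by_cases hf : DifferentiableAt 𝕜 f x
  · rw [← hf.lineDeriv_eq_fderiv, lineDeriv, funext h, deriv_const]
  · rw [fderiv_zero_of_not_differentiableAt hf, zero_apply]

theorem sum_logRate_derivatives_of_stationary_vanish_general {d : ℕ}
    (π : (Fin d → Fin d → ℝ) → (Fin d → ℝ))
    (hπnorm : ∀ ω, ∑ j, π ω j = 1)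
    (hstat : ∀ ω m, ∑ n, rateMatrix ω m n * π ω n = 0)
    -- irreducibility: the stationary distribution is the unique kernel direction
    (hker : ∀ (ω : Fin d → Fin d → ℝ) (v : Fin d → ℝ),
      (∀ m, ∑ n, rateMatrix ω m n * v n = 0) → ∃ c : ℝ, v = fun j => c * π ω j)
    (ω₀ : Fin d → Fin d → ℝ) :
    ∀ j : Fin d,
      ∑ m, ∑ n, (if m = n then 0
        else fderiv ℝ (fun ω => π ω j) ω₀ (logRateDir m n)) = 0 := by
  intro j
  have hinv : ∀ t : ℝ, π (ω₀ + t • offDiagDir d) j = π ω₀ j := fun t => by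
    rw [stationary_add_smul_offDiagDir π hπnorm hstat hker]
  calc ∑ m, ∑ n, (if m = n then 0 else fderiv ℝ (fun ω => π ω j) ω₀ (logRateDir m n))
      = fderiv ℝ (fun ω => π ω j) ω₀ (offDiagDir d) := by
        simp only [offDiagDir_eq_sum_logRateDir, map_sum, apply_ite, map_zero]
    _ = 0 := fderiv_apply_eq_zero_of_forall_add_smul_eq hinv

/-- For an irreducible rate matrix `W` with rates `w_{mn} = e^{ω_{mn}}` and stationary
distribution `π(ω)`, the sum over all off-diagonal log-rate derivatives of each
stationary probability vanishes: `Σ_{m≠n} ∂π_j/∂ω_{mn} = 0` for every state `j`. -/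
theorem sum_logRate_derivatives_of_stationary_vanish {d : ℕ} (hd : 0 < d)
    (π : (Fin d → Fin d → ℝ) → (Fin d → ℝ))
    (hπdiff : Differentiable ℝ π)
    (hπpos : ∀ ω j, 0 < π ω j)
    (hπnorm : ∀ ω, ∑ j, π ω j = 1)
    (hstat : ∀ ω m, ∑ n, rateMatrix ω m n * π ω n = 0)
    -- irreducibility: the stationary distribution is the unique kernel direction
    (hker : ∀ (ω : Fin d → Fin d → ℝ) (v : Fin d → ℝ),
      (∀ m, ∑ n, rateMatrix ω m n * v n = 0) → ∃ c : ℝ, v = fun j => c * π ω j)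
    (ω₀ : Fin d → Fin d → ℝ) :
    ∀ j : Fin d,
      ∑ m, ∑ n, (if m = n then 0
        else fderiv ℝ (fun ω => π ω j) ω₀ (logRateDir m n)) = 0 :=
  sum_logRate_derivatives_of_stationary_vanish_general π hπnorm hstat hker ω₀
end

section
/- Classical vanishing of the coherent correction: if H = Σ_n ε_n |n⟩⟨n| and each jump operator has the form L_k = √γ_{mₖnₖ} |mₖ⟩⟨nₖ| (one operator for each ordered pair m≠n with rate γ_{mn}), with stationary state π diagonal in the basis {|n⟩}, then Σ_k ℓ_k (L_k π L_k† − ½{L_k† L_k, π}) = 0, where ℓ_k = (tr(L_k π L_k†) − tr(L_{k*} π L_{k*}†))/(tr(L_k π L_k†) + tr(L_{k*} π L_{k*}†)) and k* labels the reverse jump (n,m) for k = (m,n). -/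
/-!
For `m ≠ n` the jump `L = √γₘₙ |m⟩⟨n|` maps the diagonal state `π` to
`D[L](π) = γₘₙ πₙ (|m⟩⟨m| - |n⟩⟨n|)`, so the weighted sum is `Σₘₙ cₘₙ (Eₘₘ - Eₙₙ)` with
`cₘₙ = ℓₘₙ γₘₙ πₙ`. Regrouping by diagonal entry gives `Σₘ (Σₙ (cₘₙ - cₙₘ)) Eₘₘ`, and since
`ℓₙₘ = -ℓₘₙ` with the same denominator, `cₘₙ - cₙₘ = γₘₙ πₙ - γₙₘ πₘ` is exactly the net
probability current, whose row sums vanish by stationarity.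
-/

open Matrix

namespace Matrix

variable {ι R : Type*} [Fintype ι] [DecidableEq ι] [NonUnitalNonAssocSemiring R]

theorem single_mul_diagonal (i j : ι) (a : R) (f : ι → R) :
    single i j a * diagonal f = single i j (a * f j) := by
  ext k l
  rw [mul_diagonal, single_apply, single_apply]
  split_ifs with h <;> simp_all

theorem diagonal_mul_single (i j : ι) (a : R) (f : ι → R) :
    diagonal f * single i j a = single i j (f i * a) := by
  ext k l
  rw [diagonal_mul, single_apply, single_apply]
  split_ifs with h <;> simp_all

end Matrix

section Dissipator

variable {ι 𝕜 : Type*} [Fintype ι] [DecidableEq ι] [Field 𝕜] [StarRing 𝕜] [CharZero 𝕜]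

def lindbladDissipator (L ρ : Matrix ι ι 𝕜) : Matrix ι ι 𝕜 :=
  L * ρ * Lᴴ - (1 / 2 : 𝕜) • (Lᴴ * L * ρ + ρ * (Lᴴ * L))

theorem lindbladDissipator_single_diagonal (m n : ι) (a : 𝕜) (f : ι → 𝕜) :
    lindbladDissipator (single m n a) (diagonal f) =
      (star a * a * f n) • (single m m 1 - single n n 1) := by
  simp only [lindbladDissipator, conjTranspose_single, single_mul_diagonal, diagonal_mul_single,
    single_mul_single_same, ← single_add, smul_single, smul_sub, smul_eq_mul, mul_one]
  congr 2 <;> ring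

end Dissipator

theorem Finset.sum_sum_smul_sub {ι R M : Type*} [Ring R] [AddCommGroup M] [Module R M]
    (s : Finset ι) (c : ι → ι → R) (v : ι → M) :
    ∑ i ∈ s, ∑ j ∈ s, c i j • (v i - v j) = ∑ i ∈ s, (∑ j ∈ s, (c i j - c j i)) • v i := by
  simp only [smul_sub, Finset.sum_sub_distrib, sub_smul, Finset.sum_smul]
  rw [Finset.sum_comm (f := fun i j => c i j • v j)]

theorem div_add_mul_sub_div_add_mul_eq_sub {K : Type*} [Field K] {a b : K} (h : a + b ≠ 0) :
    (a - b) / (a + b) * a - (b - a) / (b + a) * b = a - b := by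
  rw [add_comm b a]
  field_simp
  ring

theorem classical_coherent_correction_vanishes_general {d : ℕ}
    (γ : Fin d → Fin d → ℝ) (p : Fin d → ℝ)
    (hγ : ∀ m n, m ≠ n → 0 < γ m n)
    (hp : ∀ j, 0 < p j)
    (hstat : ∀ m, ∑ n ∈ Finset.univ.erase m, (γ m n * p n - γ n m * p m) = 0) :
    ∑ m, ∑ n, (if m = n then (0 : Matrix (Fin d) (Fin d) ℂ)
      else
        (((γ m n * p n - γ n m * p m) / (γ m n * p n + γ n m * p m) : ℝ) : ℂ) •
          (let L : Matrix (Fin d) (Fin d) ℂ :=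
            ((Real.sqrt (γ m n) : ℝ) : ℂ) • Matrix.single m n 1
           let π : Matrix (Fin d) (Fin d) ℂ := Matrix.diagonal fun j => ((p j : ℝ) : ℂ)
           L * π * Lᴴ - (1 / 2 : ℂ) • (Lᴴ * L * π + π * (Lᴴ * L)))) = 0 := by
  set c : Fin d → Fin d → ℂ := fun m n => (((γ m n * p n - γ n m * p m) /
    (γ m n * p n + γ n m * p m) * (γ m n * p n) : ℝ) : ℂ)
  have hnet (m n : Fin d) : c m n - c n m = ((γ m n * p n - γ n m * p m : ℝ) : ℂ) := by
    rcases eq_or_ne m n with rfl | hmn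
    · simp
    have hpos : 0 < γ m n * p n + γ n m * p m :=
      add_pos (mul_pos (hγ m n hmn) (hp n)) (mul_pos (hγ n m hmn.symm) (hp m))
    simp only [c, ← Complex.ofReal_sub, div_add_mul_sub_div_add_mul_eq_sub hpos.ne']
  calc _ = ∑ m, ∑ n, c m n • (single m m (1 : ℂ) - single n n 1) := by
        refine Finset.sum_congr rfl fun m _ => Finset.sum_congr rfl fun n _ => ?_
        split_ifs with hmn
        · simp [hmn]
        have hsq : star ((√(γ m n) : ℝ) : ℂ) * ((√(γ m n) : ℝ) : ℂ) = ((γ m n : ℝ) : ℂ) := by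
          rw [Complex.star_def, Complex.conj_ofReal, ← Complex.ofReal_mul,
            Real.mul_self_sqrt (hγ m n hmn).le]
        change _ • lindbladDissipator _ _ = _
        rw [smul_single, smul_eq_mul, mul_one, lindbladDissipator_single_diagonal, hsq, smul_smul]
        simp only [c, Complex.ofReal_mul]
    _ = ∑ m, (∑ n, (c m n - c n m)) • single m m (1 : ℂ) := Finset.sum_sum_smul_sub _ _ _
    _ = 0 := by
        refine Finset.sum_eq_zero fun m _ => ?_
        have hflow : ∑ n, (γ m n * p n - γ n m * p m) = 0 := by
          rw [← hstat m]
          exact (Finset.sum_erase _ (sub_self _)).symm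
        rw [Finset.sum_congr rfl fun n _ => hnet m n, ← Complex.ofReal_sum, hflow,
          Complex.ofReal_zero, zero_smul]

/-- Classical vanishing of the coherent correction: for classical (diagonal) dynamics
with jump operators `L_{(m,n)} = √γ_{mn} |m⟩⟨n|` and a diagonal stationary state
`π = diag(p)`, the weighted sum
`Σ_{m≠n} ℓ_{mn} (L π Lᴴ − ½{LᴴL, π})` vanishes, where
`ℓ_{mn} = (γ_{mn} p_n − γ_{nm} p_m) / (γ_{mn} p_n + γ_{nm} p_m)`. -/
theorem classical_coherent_correction_vanishes {d : ℕ}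
    (γ : Fin d → Fin d → ℝ) (p : Fin d → ℝ)
    (hγ : ∀ m n, m ≠ n → 0 < γ m n)
    (hp : ∀ j, 0 < p j) (hnorm : ∑ j, p j = 1)
    (hstat : ∀ m, ∑ n ∈ Finset.univ.erase m, (γ m n * p n - γ n m * p m) = 0) :
    ∑ m, ∑ n, (if m = n then (0 : Matrix (Fin d) (Fin d) ℂ)
      else
        (((γ m n * p n - γ n m * p m) / (γ m n * p n + γ n m * p m) : ℝ) : ℂ) •
          (let L : Matrix (Fin d) (Fin d) ℂ :=
            ((Real.sqrt (γ m n) : ℝ) : ℂ) • Matrix.single m n 1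
           let π : Matrix (Fin d) (Fin d) ℂ := Matrix.diagonal fun j => ((p j : ℝ) : ℂ)
           L * π * Lᴴ - (1 / 2 : ℂ) • (Lᴴ * L * π + π * (Lᴴ * L)))) = 0 :=
  classical_coherent_correction_vanishes_general γ p hγ hp hstat
end

section
/- Jensen-type bound used in the quantum TKUR proof: for finitely many pairs (σᵢ, aᵢ) with aᵢ > 0, setting σ = Σᵢ σᵢ and a = Σᵢ aᵢ, concavity of g(σ,a) = (σ²/a)Φ(σ/a)⁻² implies Σᵢ gᵢ(σᵢ, aᵢ) ≤ g(σ, a) ≤ min(σ/2, a) when each σᵢ = (xᵢ − yᵢ)ln(xᵢ/yᵢ) and aᵢ = xᵢ + yᵢ for positive xᵢ, yᵢ. In particular Σᵢ (xᵢ−yᵢ)²/(xᵢ+yᵢ) ≤ (σ²/(4a))Φ(σ/(2a))⁻² ≤ min(σ/2, a). -/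
/-!
Write `aᵢ = xᵢ + yᵢ` and `uᵢ = log (xᵢ / yᵢ) / 2`, so that `tanh uᵢ = (xᵢ - yᵢ) / aᵢ`: the
`i`-th summand is `aᵢ tanh² uᵢ` and `σᵢ = 2 aᵢ uᵢ tanh uᵢ`. The function
`F s = √s artanh √s = ∑ s^(k+1) / (2k+1)` satisfies `F (tanh² u) = u tanh u` and, as a power
series with nonnegative coefficients, is convex and strictly increasing on `[0, 1)`. Jensen's
inequality with weights `aᵢ / a` gives `F (∑ aᵢ tanh² uᵢ / a) ≤ σ / (2a) = F (tanh² U)` for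
`U = Φ (σ / (2a))`, hence `∑ aᵢ tanh² uᵢ ≤ a tanh² U`, which is the middle term. The upper
bound is `tanh² U ≤ min (U tanh U) 1`.
-/

open Real Finset

noncomputable def sqrtMulArtanhSqrt (s : ℝ) : ℝ := ∑' k : ℕ, s ^ (k + 1) / (2 * k + 1)

theorem summable_sqrtMulArtanhSqrt {s : ℝ} (hs : s ∈ Set.Ico (0 : ℝ) 1) :
    Summable fun k : ℕ => s ^ (k + 1) / (2 * k + 1) := by
  refine (summable_geometric_of_lt_one hs.1 hs.2).of_nonneg_of_le
    (fun k => by have := hs.1; positivity) fun k => ?_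
  calc s ^ (k + 1) / (2 * k + 1) ≤ s ^ (k + 1) :=
        div_le_self (pow_nonneg hs.1 _) (by linarith [k.cast_nonneg (α := ℝ)])
    _ ≤ s ^ k := pow_le_pow_of_le_one hs.1 hs.2.le k.le_succ

theorem sqrtMulArtanhSqrt_tanh_sq (u : ℝ) : sqrtMulArtanhSqrt (tanh u ^ 2) = u * tanh u := by
  have hlog : log (1 + tanh u) - log (1 - tanh u) = 2 * u := by
    have h := artanh_eq_half_log (Set.Ioo_subset_Icc_self ⟨neg_one_lt_tanh u, tanh_lt_one u⟩)
    rw [artanh_tanh, log_div (by linarith [neg_one_lt_tanh u]) (by linarith [tanh_lt_one u])] at h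
    linarith
  have h := (hasSum_log_sub_log_of_abs_lt_one (abs_tanh_lt_one u)).mul_right (tanh u / 2)
  rw [hlog, show 2 * u * (tanh u / 2) = u * tanh u by ring] at h
  refine h.tsum_eq ▸ tsum_congr fun k => ?_
  ring

theorem sqrtMulArtanhSqrt_zero : sqrtMulArtanhSqrt 0 = 0 := by
  simpa using sqrtMulArtanhSqrt_tanh_sq 0

theorem add_sub_le_sqrtMulArtanhSqrt {s t : ℝ} (hs : 0 ≤ s) (hst : s ≤ t) (ht : t < 1) :
    sqrtMulArtanhSqrt s + (t - s) ≤ sqrtMulArtanhSqrt t := by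
  refine hasSum_le (fun k => ?_) ((summable_sqrtMulArtanhSqrt ⟨hs, hst.trans_lt ht⟩).hasSum.add
    (hasSum_ite_eq 0 (t - s))) (summable_sqrtMulArtanhSqrt ⟨hs.trans hst, ht⟩).hasSum
  rcases eq_or_ne k 0 with rfl | hk
  · norm_num
  · simp only [hk, if_false, add_zero]
    gcongr

theorem strictMonoOn_sqrtMulArtanhSqrt : StrictMonoOn sqrtMulArtanhSqrt (Set.Ico 0 1) :=
  fun s hs t ht hst => by
    linarith [add_sub_le_sqrtMulArtanhSqrt hs.1 hst.le ht.2]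

theorem tanh_sq_le_mul_tanh (u : ℝ) : tanh u ^ 2 ≤ u * tanh u := by
  have h := add_sub_le_sqrtMulArtanhSqrt le_rfl (sq_nonneg (tanh u)) (tanh_sq_lt_one u)
  rw [sqrtMulArtanhSqrt_zero, sqrtMulArtanhSqrt_tanh_sq] at h
  linarith

theorem convexOn_sqrtMulArtanhSqrt : ConvexOn ℝ (Set.Ico 0 1) sqrtMulArtanhSqrt := by
  refine ⟨convex_Ico 0 1, fun s hs t ht a b ha hb hab => ?_⟩
  have hmem := convex_Ico (0 : ℝ) 1 hs ht ha hb hab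
  simp only [smul_eq_mul] at hmem ⊢
  have hterm (k : ℕ) : (a * s + b * t) ^ (k + 1) / (2 * k + 1)
      ≤ a * (s ^ (k + 1) / (2 * k + 1)) + b * (t ^ (k + 1) / (2 * k + 1)) := by
    have := (convexOn_pow (k + 1)).2 (Set.mem_Ici.2 hs.1) (Set.mem_Ici.2 ht.1) ha hb hab
    simp only [smul_eq_mul] at this
    rw [mul_div_assoc', mul_div_assoc', ← add_div]
    gcongr
  calc sqrtMulArtanhSqrt (a * s + b * t)
      ≤ ∑' k : ℕ, (a * (s ^ (k + 1) / (2 * k + 1)) + b * (t ^ (k + 1) / (2 * k + 1))) :=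
        (summable_sqrtMulArtanhSqrt hmem).tsum_le_tsum hterm
          (((summable_sqrtMulArtanhSqrt hs).mul_left a).add
            ((summable_sqrtMulArtanhSqrt ht).mul_left b))
    _ = a * sqrtMulArtanhSqrt s + b * sqrtMulArtanhSqrt t := by
      rw [Summable.tsum_add ((summable_sqrtMulArtanhSqrt hs).mul_left a)
        ((summable_sqrtMulArtanhSqrt ht).mul_left b), tsum_mul_left, tsum_mul_left]
      rfl

theorem sum_mul_tanh_sq_le {ι : Type*} (s : Finset ι) (a u : ι → ℝ) (ha : ∀ i ∈ s, 0 ≤ a i)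
    (U : ℝ) (hU : ∑ i ∈ s, a i * (u i * tanh (u i)) = (∑ i ∈ s, a i) * (U * tanh U)) :
    ∑ i ∈ s, a i * tanh (u i) ^ 2 ≤ (∑ i ∈ s, a i) * tanh U ^ 2 := by
  rcases (sum_nonneg ha).eq_or_lt with hA | hA
  · have ha0 := (sum_eq_zero_iff_of_nonneg ha).1 hA.symm
    rw [← hA, zero_mul]
    exact (sum_eq_zero fun i hi => by rw [ha0 i hi, zero_mul]).le
  have hmem : ∀ i ∈ s, tanh (u i) ^ 2 ∈ Set.Ico (0 : ℝ) 1 :=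
    fun i _ => ⟨sq_nonneg _, tanh_sq_lt_one _⟩
  have hjensen := convexOn_sqrtMulArtanhSqrt.map_centerMass_le ha hA hmem
  simp only [Function.comp_def, sqrtMulArtanhSqrt_tanh_sq] at hjensen
  have hc : s.centerMass a (fun i => tanh (u i) ^ 2) ≤ tanh U ^ 2 := by
    refine (strictMonoOn_sqrtMulArtanhSqrt.le_iff_le
      ((convex_Ico 0 1).centerMass_mem ha hA hmem) ⟨sq_nonneg _, tanh_sq_lt_one U⟩).1 ?_
    rw [sqrtMulArtanhSqrt_tanh_sq]
    refine hjensen.trans_eq ?_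
    simp only [centerMass, smul_eq_mul, hU]
    field_simp
  rw [centerMass, smul_eq_mul, inv_mul_le_iff₀ hA] at hc
  simpa using hc

theorem tanh_log_div_div_two {x y : ℝ} (hx : 0 < x) (hy : 0 < y) :
    tanh (log (x / y) / 2) = (x - y) / (x + y) := by
  have hr : (x - y) / (x + y) ∈ Set.Ioo (-1 : ℝ) 1 := by
    rw [Set.mem_Ioo, lt_div_iff₀ (by positivity), div_lt_one (by positivity)]
    constructor <;> linarith
  have h := artanh_eq_half_log (Set.Ioo_subset_Icc_self hr)
  rw [show (1 + (x - y) / (x + y)) / (1 - (x - y) / (x + y)) = x / y by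
    field_simp [hy.ne']; ring] at h
  rw [show log (x / y) / 2 = artanh ((x - y) / (x + y)) by rw [h]; ring, tanh_artanh hr]

theorem jensen_tkur_bound_general {n : ℕ}
    (Φ : ℝ → ℝ)
    (hΦ_right : ∀ x ≥ (0 : ℝ), (Φ x) * Real.tanh (Φ x) = x)
    (x y : Fin n → ℝ) (hx : ∀ i, 0 < x i) (hy : ∀ i, 0 < y i) :
    (∑ i, (x i - y i) ^ 2 / (x i + y i))
      ≤ ((∑ i, (x i - y i) * Real.log (x i / y i)) ^ 2 / (4 * ∑ i, (x i + y i))) *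
          ((Φ ((∑ i, (x i - y i) * Real.log (x i / y i)) / (2 * ∑ i, (x i + y i))))⁻¹) ^ 2 ∧
    ((∑ i, (x i - y i) * Real.log (x i / y i)) ^ 2 / (4 * ∑ i, (x i + y i))) *
        ((Φ ((∑ i, (x i - y i) * Real.log (x i / y i)) / (2 * ∑ i, (x i + y i))))⁻¹) ^ 2
      ≤ min ((∑ i, (x i - y i) * Real.log (x i / y i)) / 2) (∑ i, (x i + y i)) := by
  obtain rfl | hn := n.eq_zero_or_pos
  · simp
  have hxy i : 0 < x i + y i := add_pos (hx i) (hy i)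
  set u : Fin n → ℝ := fun i => log (x i / y i) / 2
  have htanh i : tanh (u i) = (x i - y i) / (x i + y i) := tanh_log_div_div_two (hx i) (hy i)
  have hsummand i : (x i - y i) ^ 2 / (x i + y i) = (x i + y i) * tanh (u i) ^ 2 := by
    rw [htanh]
    field_simp
  have hσ i : (x i - y i) * log (x i / y i) = 2 * ((x i + y i) * (u i * tanh (u i))) := by
    rw [htanh, show log (x i / y i) = 2 * u i by simp only [u]; ring]
    field_simp [(hxy i).ne']
  simp only [hsummand, hσ, ← mul_sum]
  set A := ∑ i, (x i + y i)
  set T := ∑ i, (x i + y i) * (u i * tanh (u i))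
  have hA : 0 < A := sum_pos (fun i _ => hxy i) ⟨⟨0, hn⟩, mem_univ _⟩
  have hT : 0 ≤ T := sum_nonneg fun i _ =>
    mul_nonneg (hxy i).le ((sq_nonneg _).trans (tanh_sq_le_mul_tanh _))
  set U := Φ (2 * T / (2 * A))
  have hU : T = A * (U * tanh U) := by
    rw [hΦ_right _ (by positivity)]
    field_simp
  have hmiddle : (2 * T) ^ 2 / (4 * A) * (U⁻¹) ^ 2 = A * tanh U ^ 2 := by
    rcases eq_or_ne U 0 with h | h
    · simp [h]
    · rw [hU]
      field_simp
      ring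
  rw [hmiddle]
  refine ⟨sum_mul_tanh_sq_le _ _ _ (fun i _ => (hxy i).le) U hU, le_min ?_ ?_⟩
  · rw [hU]
    linarith [mul_le_mul_of_nonneg_left (tanh_sq_le_mul_tanh U) hA.le]
  · exact mul_le_of_le_one_right hA.le (tanh_sq_lt_one U).le

/-- Jensen-type bound used in the quantum TKUR proof: for positive `xᵢ, yᵢ`, setting
`σᵢ = (xᵢ − yᵢ) ln(xᵢ/yᵢ)`, `aᵢ = xᵢ + yᵢ`, `σ = Σ σᵢ`, `a = Σ aᵢ`, concavity of
`g(σ,a) = (σ²/a) Φ(σ/a)⁻²` gives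
`Σᵢ (xᵢ−yᵢ)²/(xᵢ+yᵢ) ≤ (σ²/(4a)) Φ(σ/(2a))⁻² ≤ min (σ/2) a`,
where `Φ` is the (even extension of the) inverse of `x ↦ x tanh x`. -/
theorem jensen_tkur_bound {n : ℕ} (hn : 0 < n)
    (Φ : ℝ → ℝ)
    (hΦ_nonneg : ∀ x ≥ (0 : ℝ), 0 ≤ Φ x)
    (hΦ_left : ∀ x ≥ (0 : ℝ), Φ (x * Real.tanh x) = x)
    (hΦ_right : ∀ x ≥ (0 : ℝ), (Φ x) * Real.tanh (Φ x) = x)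
    (hΦ_even : ∀ x : ℝ, Φ x = Φ |x|)
    (x y : Fin n → ℝ) (hx : ∀ i, 0 < x i) (hy : ∀ i, 0 < y i) :
    (∑ i, (x i - y i) ^ 2 / (x i + y i))
      ≤ ((∑ i, (x i - y i) * Real.log (x i / y i)) ^ 2 / (4 * ∑ i, (x i + y i))) *
          ((Φ ((∑ i, (x i - y i) * Real.log (x i / y i)) / (2 * ∑ i, (x i + y i))))⁻¹) ^ 2 ∧
    ((∑ i, (x i - y i) * Real.log (x i / y i)) ^ 2 / (4 * ∑ i, (x i + y i))) *
        ((Φ ((∑ i, (x i - y i) * Real.log (x i / y i)) / (2 * ∑ i, (x i + y i))))⁻¹) ^ 2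
      ≤ min ((∑ i, (x i - y i) * Real.log (x i / y i)) / 2) (∑ i, (x i + y i)) :=
  jensen_tkur_bound_general Φ hΦ_right x y hx hy
end
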